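/- arXiv:1805.06785 — 3 statements merged into one kernel-verified Lean document; each statement's English description precedes it below -/
import Mathlib

section
/- Let V be a real vector space, p, q positive real numbers, and F : V → V a linear map satisfying F² = id (an almost product structure). Then J₁ := (p/2)·id + ((2σ_{p,q} − p)/2)·F is a metallic structure on V, i.e., J₁² = p·J₁ + q·id. -/
/-- The (p,q)-metallic number. -/
noncomputable def metallic (p q : ℝ) : ℝ := (p + Real.sqrt (p ^ 2 + 4 * q)) / 2

theorem metallic_sq {p q : ℝ} (h : 0 ≤ p ^ 2 + 4 * q) :
    metallic p q ^ 2 = p * metallic p q + q := by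
  have hsqrt := Real.sq_sqrt h
  unfold metallic
  linear_combination hsqrt / 4

def IsMetallic {R A : Type*} [CommRing R] [Ring A] [Algebra R A] (p q : R) (J : A) : Prop :=
  J * J = p • J + q • 1

section Involution

variable {R A : Type*} [CommRing R] [Ring A] [Algebra R A] {F : A}

theorem mul_self_smul_one_add_smul (hF : F * F = 1) (a b : R) :
    (a • 1 + b • F) * (a • 1 + b • F) = (a ^ 2 + b ^ 2) • (1 : A) + (2 * a * b) • F := by
  simp only [add_mul, mul_add, smul_mul_smul, one_mul, mul_one, hF]
  module

theorem isMetallic_smul_one_add_smul (hF : F * F = 1) {p q a b : R}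
    (hconst : a ^ 2 + b ^ 2 = p * a + q) (hlin : 2 * a * b = p * b) :
    IsMetallic p q (a • 1 + b • F) := by
  rw [IsMetallic, mul_self_smul_one_add_smul hF, hconst, hlin, add_smul, smul_add, smul_smul,
    smul_smul]
  abel

end Involution

theorem almostProduct_induces_metallic_fst_general (V : Type*) [AddCommGroup V] [Module ℝ V]
    (p q : ℝ) (hq : 0 < q)
    (F : V →ₗ[ℝ] V) (hF : F ∘ₗ F = LinearMap.id) :
    letI J₁ : V →ₗ[ℝ] V :=
      (p / 2) • LinearMap.id + ((2 * metallic p q - p) / 2) • F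
    J₁ ∘ₗ J₁ = p • J₁ + q • LinearMap.id := by
  have hσ := metallic_sq (p := p) (q := q) (by positivity)
  exact isMetallic_smul_one_add_smul (A := Module.End ℝ V) hF
    (by linear_combination hσ) (by ring)

theorem almostProduct_induces_metallic_fst (V : Type*) [AddCommGroup V] [Module ℝ V]
    (p q : ℝ) (hp : 0 < p) (hq : 0 < q)
    (F : V →ₗ[ℝ] V) (hF : F ∘ₗ F = LinearMap.id) :
    letI J₁ : V →ₗ[ℝ] V :=
      (p / 2) • LinearMap.id + ((2 * metallic p q - p) / 2) • F
    J₁ ∘ₗ J₁ = p • J₁ + q • LinearMap.id :=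
  almostProduct_induces_metallic_fst_general V p q hq F hF
end

section
/- Let V be a real vector space, p, q positive real numbers, and F : V → V a linear map satisfying F² = id (an almost product structure). Then J₂ := (p/2)·id − ((2σ_{p,q} − p)/2)·F is a metallic structure on V, i.e., J₂² = p·J₂ + q·id. -/
theorem two_mul_metallic_sub (p q : ℝ) : 2 * metallic p q - p = √(p ^ 2 + 4 * q) := by
  unfold metallic
  ring

theorem half_smul_one_sub_smul_mul_self_of_mul_self_eq_one {k A : Type*} [Field k]
    [NeZero (2 : k)] [Ring A] [Algebra k A] {f : A} (hf : f * f = 1) {p q c : k}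
    (hc : c ^ 2 = (p / 2) ^ 2 + q) :
    ((p / 2) • 1 - c • f) * ((p / 2) • 1 - c • f) = p • ((p / 2) • 1 - c • f) + q • (1 : A) := by
  have hcf : (c • f) * (c • f) = ((p / 2) ^ 2 + q) • (1 : A) := by
    rw [smul_mul_smul, hf, ← sq, hc]
  simp only [sub_mul, mul_sub, hcf, smul_mul_smul, one_mul, mul_one]
  match_scalars <;> field_simp <;> ring

theorem almostProduct_induces_metallic_snd_general (V : Type*) [AddCommGroup V] [Module ℝ V]
    (p q : ℝ) (hq : 0 < q)
    (F : V →ₗ[ℝ] V) (hF : F ∘ₗ F = LinearMap.id) :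
    letI J₂ : V →ₗ[ℝ] V :=
      (p / 2) • LinearMap.id - ((2 * metallic p q - p) / 2) • F
    J₂ ∘ₗ J₂ = p • J₂ + q • LinearMap.id := by
  have hc : ((2 * metallic p q - p) / 2) ^ 2 = (p / 2) ^ 2 + q := by
    rw [two_mul_metallic_sub, div_pow, Real.sq_sqrt (by positivity)]
    ring
  exact half_smul_one_sub_smul_mul_self_of_mul_self_eq_one (A := Module.End ℝ V) hF hc

theorem almostProduct_induces_metallic_snd (V : Type*) [AddCommGroup V] [Module ℝ V]
    (p q : ℝ) (hp : 0 < p) (hq : 0 < q)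
    (F : V →ₗ[ℝ] V) (hF : F ∘ₗ F = LinearMap.id) :
    letI J₂ : V →ₗ[ℝ] V :=
      (p / 2) • LinearMap.id - ((2 * metallic p q - p) / 2) • F
    J₂ ∘ₗ J₂ = p • J₂ + q • LinearMap.id :=
  almostProduct_induces_metallic_snd_general V p q hq F hF
end

section
/- Let V be a real vector space, p, q positive real numbers, and J : V → V a linear map satisfying J² = p·J + q·id (a metallic structure). Then each of the two linear maps F = ±( (2/(2σ_{p,q} − p))·J − (p/(2σ_{p,q} − p))·id ) is an almost product structure on V, i.e., F² = id. -/
/-! Completing the square: `(2J - p)² = (p² + 4q) • 1`, and `2σ_{p,q} - p = √(p² + 4q)`. -/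

section MetallicAlgebra

variable {A : Type*} [Ring A]

theorem two_smul_sub_mul_self_of_metallic {R : Type*} [CommRing R] [Algebra R A] {p q : R} {J : A}
    (hJ : J * J = p • J + q • 1) :
    ((2 : R) • J - p • 1) * ((2 : R) • J - p • 1) = (p ^ 2 + 4 * q) • (1 : A) := by
  simp only [sub_mul, mul_sub, smul_mul_assoc, mul_smul_comm, one_mul, mul_one, hJ]
  module

theorem almostProduct_of_metallic {K : Type*} [Field K] [Algebra K A] {p q s : K}
    {J : A} (hJ : J * J = p • J + q • 1)
    (hs : s ^ 2 = p ^ 2 + 4 * q) (hs0 : s ≠ 0) :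
    ((2 / s) • J - (p / s) • 1) * ((2 / s) • J - (p / s) • 1) = 1 := by
  have hF : (2 / s) • J - (p / s) • (1 : A) = s⁻¹ • ((2 : K) • J - p • 1) := by
    rw [smul_sub, smul_smul, smul_smul, div_eq_inv_mul, div_eq_inv_mul]
  rw [hF, smul_mul_smul_comm, two_smul_sub_mul_self_of_metallic hJ, smul_smul, ← hs,
    ← sq, ← mul_pow, inv_mul_cancel₀ hs0, one_pow, one_smul]

end MetallicAlgebra

theorem metallic_induces_almostProduct_general (V : Type*) [AddCommGroup V] [Module ℝ V]
    (p q : ℝ) (hq : 0 < q)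
    (J : V →ₗ[ℝ] V) (hJ : J ∘ₗ J = p • J + q • LinearMap.id) :
    letI F : V →ₗ[ℝ] V :=
      (2 / (2 * metallic p q - p)) • J - (p / (2 * metallic p q - p)) • LinearMap.id
    F ∘ₗ F = LinearMap.id ∧ (-F) ∘ₗ (-F) = LinearMap.id := by
  have hdisc : 0 < p ^ 2 + 4 * q := by positivity
  have hF : ((2 / (2 * metallic p q - p)) • J - (p / (2 * metallic p q - p)) • 1) *
      ((2 / (2 * metallic p q - p)) • J - (p / (2 * metallic p q - p)) • 1) = 1 := by
    refine almostProduct_of_metallic hJ ?_ ?_ <;> rw [two_mul_metallic_sub]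
    · exact Real.sq_sqrt hdisc.le
    · exact (Real.sqrt_pos.mpr hdisc).ne'
  exact ⟨hF, (neg_mul_neg _ _).trans hF⟩

theorem metallic_induces_almostProduct (V : Type*) [AddCommGroup V] [Module ℝ V]
    (p q : ℝ) (hp : 0 < p) (hq : 0 < q)
    (J : V →ₗ[ℝ] V) (hJ : J ∘ₗ J = p • J + q • LinearMap.id) :
    letI F : V →ₗ[ℝ] V :=
      (2 / (2 * metallic p q - p)) • J - (p / (2 * metallic p q - p)) • LinearMap.id
    F ∘ₗ F = LinearMap.id ∧ (-F) ∘ₗ (-F) = LinearMap.id :=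
  metallic_induces_almostProduct_general V p q hq J hJ
end
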